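/- For every 1 ≤ a ≤ d, the simplicial boundary map ∂ on the free ℚ-vector space with basis the hyperedge set of Ω_a^{(r,d)} is injective; that is, b_{r−1}(Ω_a^{(r,d)}) = 0. Together with homogeneity of the partition, this shows that (Ω_1^{(r,d)},…,Ω_d^{(r,d)}) is an acyclic d-partition of the r-uniform complete hypergraph K_{rd}^{(r)}. -/

import Mathlib

open Finset
open scoped Classical

/-- `Sset r a` is the set `S_a = {r(a-1)+1, ..., ra}`. -/
def Sset (r a : ℕ) : Finset ℕ := Finset.Icc (r * (a - 1) + 1) (r * a)

/-- The hyperedge set of the `r`-uniform hypergraph `Ω_a^{(r,d)}`: all `r`-element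
subsets `{i_1 < ... < i_r}` of `{1,...,rd}` such that there is `t ∈ {1,...,r}` with
`i_1 + ... + i_r ≡ t-1 (mod r)` and `i_t ∈ S_a` (the `t`-th smallest element `i_t`
is characterized as the `x ∈ σ` with exactly `t-1` smaller elements of `σ`). -/
noncomputable def OmegaEdges (r d a : ℕ) : Finset (Finset ℕ) :=
  ((Finset.Icc 1 (r * d)).powersetCard r).filter (fun σ =>
    ∃ t ∈ Finset.Icc 1 r, ∃ x ∈ σ,
      (σ.filter (· < x)).card = t - 1 ∧
      (∑ i ∈ σ, i) % r = t - 1 ∧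
      x ∈ Sset r a)

/-- The hyperedge set of `Γ_{k,r}(j_{k+1},...,j_r)` (where `J = {j_{k+1},...,j_r}`):
the hyperedges of `Ω_1^{(r,d)}` having exactly `k` elements in `{1,...,r}` and whose
part outside `{1,...,r}` equals `J`. -/
noncomputable def GammaEdges (r d k : ℕ) (J : Finset ℕ) : Finset (Finset ℕ) :=
  (OmegaEdges r d 1).filter (fun σ =>
    (σ ∩ Finset.Icc 1 r).card = k ∧ σ \ Finset.Icc 1 r = J)

/-- The hyperedge set of the `k`-uniform hypergraph `Γ_{k,r}^a`: all `k`-element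
subsets `{i_1 < ... < i_k}` of `{1,...,r}` with `i_1 + ... + i_k ≡ a + t (mod r)`
for some `0 ≤ t ≤ k-1`. -/
noncomputable def GammaA (r k : ℕ) (a : ℤ) : Finset (Finset ℕ) :=
  ((Finset.Icc 1 r).powersetCard k).filter (fun σ =>
    ∃ t ∈ Finset.range k, (∑ i ∈ σ, (i : ℤ)) % (r : ℤ) = (a + (t : ℤ)) % (r : ℤ))

/-- rank of `z` in `F` -/
def rk (F : Finset ℕ) (z : ℕ) : ℕ := (F.filter (· < z)).card

lemma rk_lt_rk {F : Finset ℕ} {z w : ℕ} (hz : z ∈ F) (h : z < w) : rk F z < rk F w := by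
  apply Finset.card_lt_card
  refine ⟨fun t ht => ?_, fun hsub => ?_⟩
  · simp only [mem_filter] at ht ⊢; exact ⟨ht.1, lt_trans ht.2 h⟩
  · have := hsub (by simp [hz, h] : z ∈ F.filter (· < w)); simp at this

lemma rk_mono (F : Finset ℕ) {z w : ℕ} (h : z ≤ w) : rk F z ≤ rk F w := by
  apply Finset.card_le_card
  intro t ht; simp only [mem_filter] at ht ⊢; exact ⟨ht.1, lt_of_lt_of_le ht.2 h⟩

lemma rk_injOn {F : Finset ℕ} {z w : ℕ} (hz : z ∈ F) (hw : w ∈ F)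
    (h : rk F z = rk F w) : z = w := by
  rcases lt_trichotomy z w with hlt | he | hgt
  · exact absurd h (Nat.ne_of_lt (rk_lt_rk hz hlt))
  · exact he
  · exact absurd h.symm (Nat.ne_of_lt (rk_lt_rk hw hgt))

lemma rk_le_of_mem {F : Finset ℕ} {z : ℕ} (hz : z ∈ F) : rk F z + 1 ≤ F.card := by
  have : F.filter (· < z) ⊂ F := by
    refine Finset.ssubset_iff_of_subset (filter_subset _ _) |>.mpr ⟨z, hz, by simp⟩
  exact Nat.succ_le_of_lt (Finset.card_lt_card this)

/-- number of elements of `F` above a member, via rank -/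
lemma rk_add_above {F : Finset ℕ} {z : ℕ} (hz : z ∈ F) :
    rk F z + 1 + (F.filter (fun w => z < w)).card = F.card := by
  classical
  have h1 : F.filter (fun w => ¬ w < z) = insert z (F.filter (fun w => z < w)) := by
    ext t; simp only [mem_filter, mem_insert, not_lt]
    constructor
    · rintro ⟨ht, hle⟩
      rcases eq_or_lt_of_le hle with he | hlt
      · exact Or.inl he.symm
      · exact Or.inr ⟨ht, hlt⟩
    · rintro (rfl | ⟨ht, hlt⟩)
      · exact ⟨hz, le_refl _⟩
      · exact ⟨ht, le_of_lt hlt⟩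
  have h2 := Finset.card_filter_add_card_filter_not (s := F) (p := (· < z))
  rw [h1] at h2
  have h3 : (insert z (F.filter (fun w => z < w))).card
      = (F.filter (fun w => z < w)).card + 1 := by
    rw [Finset.card_insert_of_notMem]; simp
  rw [h3] at h2
  show (F.filter (· < z)).card + 1 + (F.filter (fun w => z < w)).card = F.card
  omega

/-- Convenient membership characterization of `OmegaEdges`. -/
lemma mem_omega_iff {r d a : ℕ} (hr : 1 ≤ r) {σ : Finset ℕ} :
    σ ∈ OmegaEdges r d a ↔
      σ ⊆ Finset.Icc 1 (r * d) ∧ σ.card = r ∧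
        ∃ x ∈ σ, x ∈ Sset r a ∧ rk σ x = (∑ i ∈ σ, i) % r := by
  simp only [OmegaEdges, Finset.mem_filter, Finset.mem_powersetCard]
  constructor
  · rintro ⟨⟨hsub, hcard⟩, t, ht, x, hx, h1, h2, h3⟩
    exact ⟨hsub, hcard, x, hx, h3, by rw [show rk σ x = t - 1 from h1, h2]⟩
  · rintro ⟨hsub, hcard, x, hx, hxS, hrk⟩
    refine ⟨⟨hsub, hcard⟩, (∑ i ∈ σ, i) % r + 1, ?_, x, hx, ?_, ?_, hxS⟩
    · simp only [Finset.mem_Icc]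
      exact ⟨by omega, by have := Nat.mod_lt (∑ i ∈ σ, i) (show 0 < r by omega); omega⟩
    · simpa [rk] using hrk
    · simp

/-- the witness of an edge -/
noncomputable def witn (r a : ℕ) (σ : Finset ℕ) : ℕ :=
  if h : ∃ x, x ∈ σ ∧ x ∈ Sset r a ∧ rk σ x = (∑ i ∈ σ, i) % r then h.choose else 0

lemma witn_spec {r d a : ℕ} (hr : 1 ≤ r) {σ : Finset ℕ} (hσ : σ ∈ OmegaEdges r d a) :
    witn r a σ ∈ σ ∧ witn r a σ ∈ Sset r a ∧
      rk σ (witn r a σ) = (∑ i ∈ σ, i) % r := by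
  obtain ⟨-, -, x, hx, hxS, hrk⟩ := (mem_omega_iff hr).mp hσ
  have h : ∃ x, x ∈ σ ∧ x ∈ Sset r a ∧ rk σ x = (∑ i ∈ σ, i) % r := ⟨x, hx, hxS, hrk⟩
  rw [witn, dif_pos h]
  exact ⟨h.choose_spec.1, h.choose_spec.2.1, h.choose_spec.2.2⟩

lemma rmul_split {r a : ℕ} (ha : 1 ≤ a) : r * a = r * (a - 1) + r := by
  cases a with
  | zero => omega
  | succ n => simp [Nat.succ_sub_one, Nat.mul_succ]

lemma mem_Sset_iff {r a z : ℕ} (ha : 1 ≤ a) :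
    z ∈ Sset r a ↔ r * (a - 1) + 1 ≤ z ∧ z ≤ r * (a - 1) + r := by
  simp [Sset, Finset.mem_Icc, rmul_split ha]

/-- the base for digit representation -/
def Bb (r d : ℕ) : ℕ := 2 * (r * d) + 2

/-- inner potential -/
noncomputable def Vpot (r d a : ℕ) (σ : Finset ℕ) : ℕ :=
  ∑ z ∈ (σ ∩ Sset r a).filter (· ≤ witn r a σ),
    (2 * z + if z = witn r a σ then 1 else 0) *
      (Bb r d) ^ ((σ ∩ Sset r a).card - 1 - rk (σ ∩ Sset r a) z)

/-- full potential -/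
noncomputable def Wpot (r d a : ℕ) (σ : Finset ℕ) : ℕ :=
  (r - (σ ∩ Sset r a).card) * (Bb r d) ^ (r + 2) + Vpot r d a σ

lemma geom_aux (B : ℕ) (hB : 1 ≤ B) : ∀ n, (B - 1) * (∑ i ∈ range n, B ^ i) + 1 = B ^ n := by
  intro n
  induction n with
  | zero => simp
  | succ n ih =>
    rw [Finset.sum_range_succ, Nat.mul_add, pow_succ]
    have : (B - 1) * B ^ n + B ^ n = B ^ n * B := by
      cases' Nat.exists_eq_add_of_le hB with c hc
      have h1 : B - 1 = c := by omega
      rw [h1, hc]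
      ring
    omega

lemma Vpot_lt {r d a : ℕ} (hr : 1 ≤ r) (ha : 1 ≤ a) (had : a ≤ d) {σ : Finset ℕ}
    (hk : (σ ∩ Sset r a).card ≤ r) :
    Vpot r d a σ < (Bb r d) ^ (r + 2) := by
  have hB : 2 ≤ Bb r d := by unfold Bb; omega
  have hbound : ∀ z ∈ (σ ∩ Sset r a).filter (· ≤ witn r a σ),
      (2 * z + if z = witn r a σ then 1 else 0) *
        (Bb r d) ^ ((σ ∩ Sset r a).card - 1 - rk (σ ∩ Sset r a) z)
      ≤ (Bb r d - 1) * (Bb r d) ^ (r - 1) := by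
    intro z hz
    simp only [mem_filter, mem_inter] at hz
    have hzS : z ∈ Sset r a := hz.1.2
    have hzle : z ≤ r * d := by
      rw [mem_Sset_iff ha] at hzS
      have h1 : r * (a-1) + r ≤ r * d := by
        rw [← rmul_split ha]; exact Nat.mul_le_mul_left r had
      omega
    apply Nat.mul_le_mul
    · have : 2 * z + 1 ≤ Bb r d - 1 := by unfold Bb; omega
      split <;> omega
    · exact Nat.pow_le_pow_right (by omega) (by omega)
  calc Vpot r d a σ ≤ ((σ ∩ Sset r a).filter (· ≤ witn r a σ)).card •
        ((Bb r d - 1) * (Bb r d) ^ (r - 1)) := Finset.sum_le_card_nsmul _ _ _ hbound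
    _ ≤ r * ((Bb r d - 1) * (Bb r d) ^ (r - 1)) := by
        rw [smul_eq_mul]
        apply Nat.mul_le_mul_right
        exact le_trans (Finset.card_le_card (filter_subset _ _)) hk
    _ < (Bb r d) ^ (r + 2) := by
        have h1 : r < Bb r d := by unfold Bb; nlinarith
        have h2 : Bb r d - 1 < Bb r d := by omega
        have h3 : (Bb r d)^(r-1) ≤ (Bb r d)^(r-1) := le_refl _
        calc r * ((Bb r d - 1) * (Bb r d) ^ (r - 1))
            < Bb r d * (Bb r d * (Bb r d) ^ (r - 1)) := by
              apply Nat.mul_lt_mul_of_lt_of_le h1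
              apply Nat.mul_le_mul_right
              · omega
              · positivity
          _ = (Bb r d) ^ (r + 1) := by rw [← pow_succ']; rw [← pow_succ']; congr 1; omega
          _ < (Bb r d) ^ (r + 2) := Nat.pow_lt_pow_right (by omega) (by omega)


section Inner

variable {B L k : ℕ} {A A' : Finset ℕ} {x x' y : ℕ}

/-- The inner case: `A' = A - x + y`, the witness ranks satisfy the exact relation
`y - x = s' - s`; then the digit potential strictly increases. -/
lemma inner_lt (hB : 2 ≤ B)
    (hA' : A' = insert y (A.erase x))
    (hxA : x ∈ A) (hyA : y ∉ A) (hxy : x ≠ y)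
    (hk : A.card = k)
    (hx'A' : x' ∈ A')
    (hdig : ∀ z ∈ A, 2 * z + 1 ≤ B - 1)
    (hdig' : ∀ z ∈ A', 2 * z + 1 ≤ B - 1)
    (hexact : (y : ℤ) - (x : ℤ) = (rk A' x' : ℤ) - (rk A x : ℤ)) :
    ∑ z ∈ A.filter (· ≤ x), (2 * z + if z = x then 1 else 0) * B ^ (k - 1 - rk A z)
    < ∑ z ∈ A'.filter (· ≤ x'), (2 * z + if z = x' then 1 else 0) * B ^ (k - 1 - rk A' z) := by
  set s := rk A x with hs_def
  set s' := rk A' x' with hs'_def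
  have hyA' : y ∈ A' := by rw [hA']; exact mem_insert_self _ _
  have hxA' : x ∉ A' := by
    rw [hA']; simp only [mem_insert]; rintro (h | h)
    · exact hxy h
    · exact (Finset.notMem_erase x A) h
  have hk' : A'.card = k := by
    rw [hA', Finset.card_insert_of_notMem (fun h => hyA (Finset.mem_of_mem_erase h)),
      Finset.card_erase_of_mem hxA]
    have : 1 ≤ A.card := Finset.card_pos.mpr ⟨x, hxA⟩
    omega
  have hsk : s + 1 ≤ k := by rw [← hk]; exact rk_le_of_mem hxA
  have hs'k : s' + 1 ≤ k := by rw [← hk']; exact rk_le_of_mem hx'A'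
  have hBpos : 0 < B := by omega
  rcases lt_or_gt_of_ne (fun h : x = y => hxy h) with hlt | hgt
  · -- case x < y, so s' = s + (y - x)
    have hs' : s' = s + (y - x) := by omega
    -- prefix filters agree
    have hpre : ∀ z, z ≤ x → A'.filter (· < z) = A.filter (· < z) := by
      intro z hz
      rw [hA']; ext w
      simp only [mem_filter, mem_insert, mem_erase]
      constructor
      · rintro ⟨(rfl | ⟨hwx, hwA⟩), hwz⟩
        · omega
        · exact ⟨hwA, hwz⟩
      · rintro ⟨hwA, hwz⟩
        exact ⟨Or.inr ⟨by omega, hwA⟩, hwz⟩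
    set P := A.filter (· < x) with hP_def
    have hPA' : A'.filter (· < x) = P := hpre x le_rfl
    -- rank of y in A'
    have hAy : A'.filter (· < y) = (A.filter (· < y)).erase x := by
      rw [hA', ← Finset.filter_erase]
      ext w
      simp only [mem_filter, mem_insert, mem_erase]
      constructor
      · rintro ⟨(rfl | ⟨hwx, hwA⟩), hwz⟩
        · omega
        · exact ⟨⟨hwx, hwA⟩, hwz⟩
      · rintro ⟨⟨hwx, hwA⟩, hwz⟩
        exact ⟨Or.inr ⟨hwx, hwA⟩, hwz⟩
    have hxmem : x ∈ A.filter (· < y) := by simp [hxA, hlt]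
    set cmid := (A.filter (fun w => x < w ∧ w < y)).card with hcmid_def
    have hAyc : (A.filter (· < y)).card = s + 1 + cmid := by
      have hsplit : A.filter (· < y) = insert x (P ∪ A.filter (fun w => x < w ∧ w < y)) := by
        ext w
        simp only [mem_filter, mem_insert, mem_union, hP_def]
        constructor
        · rintro ⟨hwA, hwy⟩
          rcases lt_trichotomy w x with h | h | h
          · exact Or.inr (Or.inl ⟨hwA, h⟩)
          · exact Or.inl h
          · exact Or.inr (Or.inr ⟨hwA, h, hwy⟩)
        · rintro (rfl | ⟨hwA, hwx⟩ | ⟨hwA, hwx, hwy⟩)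
          · exact ⟨hxA, hlt⟩
          · exact ⟨hwA, by omega⟩
          · exact ⟨hwA, hwy⟩
      have hPcard : P.card = s := rfl
      rw [hsplit, Finset.card_insert_of_notMem, Finset.card_union_of_disjoint]
      · omega
      · rw [Finset.disjoint_left]
        intro w hw hw2
        simp only [hP_def, mem_filter] at hw hw2
        omega
      · simp only [hP_def, mem_union, mem_filter]
        rintro (⟨-, h⟩ | ⟨-, h, -⟩) <;> omega
    have hrkA'y : rk A' y = s + cmid := by
      unfold rk
      rw [hAy, Finset.card_erase_of_mem hxmem, hAyc]
      omega
    have hcmid_le : cmid ≤ y - x - 1 := by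
      have : A.filter (fun w => x < w ∧ w < y) ⊆ Finset.Ioo x y := by
        intro w hw; simp only [mem_filter] at hw; simp [Finset.mem_Ioo]; omega
      have := Finset.card_le_card this
      rw [Nat.card_Ioo] at this
      omega
    have hyx' : y < x' := by
      by_contra h
      push_neg at h
      have := rk_mono A' (h : x' ≤ y)
      rw [← hs'_def, hrkA'y] at this
      omega
    -- w0 : minimal element of A' above x
    have hne : (A'.filter (fun w => x < w)).Nonempty := ⟨x', by simp [mem_filter, hx'A']; omega⟩
    set w0 := (A'.filter (fun w => x < w)).min' hne with hw0_def
    have hw0mem := (A'.filter (fun w => x < w)).min'_mem hne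
    have hw0A' : w0 ∈ A' := (mem_filter.mp hw0mem).1
    have hxw0 : x < w0 := (mem_filter.mp hw0mem).2
    have hw0x' : w0 ≤ x' := Finset.min'_le _ _ (by simp [mem_filter, hx'A']; omega)
    have hw0P : A'.filter (· < w0) = P := by
      ext w
      simp only [mem_filter, hP_def]
      constructor
      · rintro ⟨hwA', hww0⟩
        have hwx : ¬ (x < w) := by
          intro h
          have : w0 ≤ w := Finset.min'_le _ _ (by simp [mem_filter, hwA', h])
          omega
        have hwnex : w ≠ x := fun h => hxA' (h ▸ hwA')
        have hwltx : w < x := by omega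
        have : w ∈ A'.filter (· < x) := by simp [mem_filter, hwA', hwltx]
        rw [hPA'] at this
        simpa [hP_def] using this
      · rintro ⟨hwA, hwx⟩
        have : w ∈ A'.filter (· < x) := by
          rw [hPA']; simp [hP_def, mem_filter, hwA, hwx]
        simp only [mem_filter] at this
        exact ⟨this.1, by omega⟩
    have hrkw0 : rk A' w0 = s := by unfold rk; rw [hw0P]; rfl
    -- sum manipulations
    have hsplitA : A.filter (· ≤ x) = insert x P := by
      ext w
      simp only [mem_filter, mem_insert, hP_def]
      constructor
      · rintro ⟨hwA, hwx⟩
        rcases eq_or_lt_of_le hwx with h | h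
        · exact Or.inl h
        · exact Or.inr ⟨hwA, h⟩
      · rintro (rfl | ⟨hwA, hwx⟩)
        · exact ⟨hxA, le_rfl⟩
        · exact ⟨hwA, le_of_lt hwx⟩
    have hxP : x ∉ P := by simp [hP_def]
    rw [hsplitA, Finset.sum_insert hxP]
    have hLHS_P : ∀ z ∈ P, (2 * z + if z = x then 1 else 0) * B ^ (k - 1 - rk A z)
        = 2 * z * B ^ (k - 1 - rk A z) := by
      intro z hz
      simp only [hP_def, mem_filter] at hz
      rw [if_neg (by omega)]
      ring
    -- lower bound for RHS
    have hsubset : insert w0 P ⊆ A'.filter (· ≤ x') := by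
      intro w hw
      simp only [mem_insert, hP_def, mem_filter] at hw
      rcases hw with rfl | ⟨hwA, hwx⟩
      · simp [mem_filter, hw0A', hw0x']
      · have : w ∈ A' := by
          have : w ∈ A'.filter (· < x) := by rw [hPA']; simp [hP_def, mem_filter, hwA, hwx]
          exact (mem_filter.mp this).1
        simp only [mem_filter]
        exact ⟨this, by omega⟩
    have hw0P' : w0 ∉ P := by simp only [hP_def, mem_filter]; rintro ⟨-, h⟩; omega
    have hRHS_ge : ∑ z ∈ A'.filter (· ≤ x'), (2 * z + if z = x' then 1 else 0) * B ^ (k - 1 - rk A' z)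
        ≥ ∑ z ∈ insert w0 P, (2 * z + if z = x' then 1 else 0) * B ^ (k - 1 - rk A' z) := by
      apply Finset.sum_le_sum_of_subset_of_nonneg hsubset
      intros; positivity
    rw [Finset.sum_insert hw0P'] at hRHS_ge
    have hRHS_P : ∀ z ∈ P, (2 * z + if z = x' then 1 else 0) * B ^ (k - 1 - rk A' z)
        = 2 * z * B ^ (k - 1 - rk A z) := by
      intro z hz
      simp only [hP_def, mem_filter] at hz
      have h1 : rk A' z = rk A z := by unfold rk; rw [hpre z (le_of_lt hz.2)]
      rw [if_neg (by omega), h1]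
      ring
    rw [Finset.sum_congr rfl hRHS_P] at hRHS_ge
    rw [Finset.sum_congr rfl hLHS_P]
    have hterm : (2 * x + if x = x then 1 else 0) * B ^ (k - 1 - rk A x)
        < (2 * w0 + if w0 = x' then 1 else 0) * B ^ (k - 1 - rk A' w0) := by
      rw [if_pos rfl, hrkw0, ← hs_def]
      have : 2 * x + 1 < 2 * w0 := by omega
      apply Nat.mul_lt_mul_of_lt_of_le (by split <;> omega) (le_refl _)
      positivity
    omega
  · -- case y < x, so s = s' + (x - y)
    have hs : s = s' + (x - y) := by omega
    -- small prefix filters agree (below y)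
    have hpre : ∀ z, z ≤ y → A'.filter (· < z) = A.filter (· < z) := by
      intro z hz
      rw [hA']; ext w
      simp only [mem_filter, mem_insert, mem_erase]
      constructor
      · rintro ⟨(rfl | ⟨hwx, hwA⟩), hwz⟩
        · omega
        · exact ⟨hwA, hwz⟩
      · rintro ⟨hwA, hwz⟩
        exact ⟨Or.inr ⟨by omega, hwA⟩, hwz⟩
    -- rank of y in A'
    set cmid := (A.filter (fun w => y < w ∧ w < x)).card with hcmid_def
    have hAy : A'.filter (· < y) = A.filter (· < y) := hpre y le_rfl
    have hAxc : (A.filter (· < x)).card = (A.filter (· < y)).card + cmid := by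
      have hsplit : A.filter (· < x) = A.filter (· < y) ∪ A.filter (fun w => y < w ∧ w < x) := by
        ext w
        simp only [mem_filter, mem_union]
        constructor
        · rintro ⟨hwA, hwx⟩
          rcases lt_trichotomy w y with h | h | h
          · exact Or.inl ⟨hwA, h⟩
          · exact absurd (h ▸ hwA) hyA
          · exact Or.inr ⟨hwA, h, hwx⟩
        · rintro (⟨hwA, hwy⟩ | ⟨hwA, hwy, hwx⟩)
          · exact ⟨hwA, by omega⟩
          · exact ⟨hwA, hwx⟩
      rw [hsplit, Finset.card_union_of_disjoint]
      rw [Finset.disjoint_left]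
      intro w hw hw2
      simp only [mem_filter] at hw hw2
      omega
    have hcmid_le : cmid ≤ x - y - 1 := by
      have : A.filter (fun w => y < w ∧ w < x) ⊆ Finset.Ioo y x := by
        intro w hw; simp only [mem_filter] at hw; simp [Finset.mem_Ioo]; omega
      have := Finset.card_le_card this
      rw [Nat.card_Ioo] at this
      omega
    have hrkA'y : rk A' y + cmid = s := by
      have h1 : rk A' y = (A.filter (· < y)).card := by unfold rk; rw [hAy]
      have h2 : s = (A.filter (· < x)).card := rfl
      omega
    have hx'y : x' < y := by
      by_contra h
      push_neg at h
      have := rk_mono A' (h : y ≤ x')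
      omega
    have hx'A : x' ∈ A := by
      rw [hA'] at hx'A'
      simp only [mem_insert, mem_erase] at hx'A'
      rcases hx'A' with rfl | ⟨-, h⟩
      · omega
      · exact h
    -- ranks agree below y
    have hrk_eq : ∀ z, z ≤ y → rk A' z = rk A z := by
      intro z hz; unfold rk; rw [hpre z hz]
    have hrkx' : rk A x' = s' := by rw [← hrk_eq x' (le_of_lt hx'y)]
    set P' := A.filter (· < x') with hP'_def
    have hP'A' : A'.filter (· < x') = P' := hpre x' (by omega)
    -- RHS structure
    have hsplitA' : A'.filter (· ≤ x') = insert x' P' := by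
      ext w
      simp only [mem_filter, mem_insert, hP'_def]
      constructor
      · rintro ⟨hwA', hwx'⟩
        rcases eq_or_lt_of_le hwx' with h | h
        · exact Or.inl h
        · have : w ∈ A'.filter (· < x') := by simp [mem_filter, hwA', h]
          rw [hP'A'] at this
          simp only [hP'_def, mem_filter] at this
          exact Or.inr this
      · rintro (rfl | ⟨hwA, hwx'⟩)
        · exact ⟨hx'A', le_rfl⟩
        · have : w ∈ A'.filter (· < x') := by
            rw [hP'A']; simp [hP'_def, mem_filter, hwA, hwx']
          simp only [mem_filter] at this
          exact ⟨this.1, le_of_lt this.2⟩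
    have hx'P' : x' ∉ P' := by simp [hP'_def]
    rw [hsplitA', Finset.sum_insert hx'P']
    have hRHS_P : ∀ z ∈ P', (2 * z + if z = x' then 1 else 0) * B ^ (k - 1 - rk A' z)
        = 2 * z * B ^ (k - 1 - rk A z) := by
      intro z hz
      simp only [hP'_def, mem_filter] at hz
      rw [if_neg (by omega), hrk_eq z (by omega)]
      ring
    rw [Finset.sum_congr rfl hRHS_P]
    -- LHS structure
    set Q := A.filter (fun z => x' ≤ z ∧ z ≤ x) with hQ_def
    have hsplitA : A.filter (· ≤ x) = P' ∪ Q := by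
      ext w
      simp only [mem_filter, mem_union, hP'_def, hQ_def]
      constructor
      · rintro ⟨hwA, hwx⟩
        rcases lt_or_ge w x' with h | h
        · exact Or.inl ⟨hwA, h⟩
        · exact Or.inr ⟨hwA, h, hwx⟩
      · rintro (⟨hwA, hwy⟩ | ⟨hwA, -, hwx⟩)
        · exact ⟨hwA, by omega⟩
        · exact ⟨hwA, hwx⟩
    have hdisj : Disjoint P' Q := by
      rw [Finset.disjoint_left]
      intro w hw hw2
      simp only [hP'_def, mem_filter] at hw
      simp only [hQ_def, mem_filter] at hw2
      omega
    rw [hsplitA, Finset.sum_union hdisj]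
    have hLHS_P : ∀ z ∈ P', (2 * z + if z = x then 1 else 0) * B ^ (k - 1 - rk A z)
        = 2 * z * B ^ (k - 1 - rk A z) := by
      intro z hz
      simp only [hP'_def, mem_filter] at hz
      rw [if_neg (by omega)]
      ring
    rw [Finset.sum_congr rfl hLHS_P]
    -- it remains to bound the Q-sum
    have hx'Q : x' ∈ Q := by simp only [hQ_def, mem_filter]; exact ⟨hx'A, le_rfl, by omega⟩
    set Q' := Q.erase x' with hQ'_def
    have hQins : Q = insert x' Q' := by rw [hQ'_def, Finset.insert_erase hx'Q]
    have hx'Q' : x' ∉ Q' := Finset.notMem_erase _ _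
    rw [hQins, Finset.sum_insert hx'Q']
    have hx'term : (2 * x' + if x' = x then 1 else 0) * B ^ (k - 1 - rk A x')
        = 2 * x' * B ^ (k - 1 - s') := by
      rw [if_neg (by omega), hrkx']
      ring
    rw [hx'term]
    -- bound for Q' sum
    have hQ'rk : ∀ z ∈ Q', s' + 1 ≤ rk A z ∧ rk A z ≤ s := by
      intro z hz
      simp only [hQ'_def, hQ_def, mem_erase, mem_filter] at hz
      obtain ⟨hzx', hzA, hge, hle⟩ := hz
      constructor
      · have : rk A x' < rk A z := rk_lt_rk hx'A (by omega)
        omega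
      · exact rk_mono A hle
    have hQ'bound : ∑ z ∈ Q', (2 * z + if z = x then 1 else 0) * B ^ (k - 1 - rk A z)
        < B ^ (k - 1 - s') := by
      have step1 : ∑ z ∈ Q', (2 * z + if z = x then 1 else 0) * B ^ (k - 1 - rk A z)
          ≤ ∑ z ∈ Q', (B - 1) * B ^ (k - 1 - rk A z) := by
        apply Finset.sum_le_sum
        intro z hz
        apply Nat.mul_le_mul_right
        have hzA : z ∈ A := by
          simp only [hQ'_def, hQ_def, mem_erase, mem_filter] at hz
          exact hz.2.1
        have := hdig z hzA
        split <;> omega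
      have hinj : ∀ z1 ∈ Q', ∀ z2 ∈ Q', (fun z => k - 1 - rk A z) z1 = (fun z => k - 1 - rk A z) z2 → z1 = z2 := by
        intro z1 h1 z2 h2 he
        simp only at he
        have r1 := hQ'rk z1 h1
        have r2 := hQ'rk z2 h2
        have hsk1 : s ≤ k - 1 := by omega
        have : rk A z1 = rk A z2 := by omega
        apply rk_injOn ?_ ?_ this
        · simp only [hQ'_def, hQ_def, mem_erase, mem_filter] at h1; exact h1.2.1
        · simp only [hQ'_def, hQ_def, mem_erase, mem_filter] at h2; exact h2.2.1
      have step2 : ∑ z ∈ Q', B ^ (k - 1 - rk A z) = ∑ j ∈ Q'.image (fun z => k - 1 - rk A z), B ^ j :=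
        (Finset.sum_image hinj).symm
      have step3 : Q'.image (fun z => k - 1 - rk A z) ⊆ Finset.range (k - 1 - s') := by
        intro j hj
        simp only [mem_image] at hj
        obtain ⟨z, hz, rfl⟩ := hj
        have := hQ'rk z hz
        simp only [Finset.mem_range]
        omega
      have step4 : ∑ j ∈ Q'.image (fun z => k - 1 - rk A z), B ^ j
          ≤ ∑ j ∈ Finset.range (k - 1 - s'), B ^ j := by
        apply Finset.sum_le_sum_of_subset_of_nonneg step3
        intros; positivity
      have step5 := geom_aux B (by omega) (k - 1 - s')
      calc ∑ z ∈ Q', (2 * z + if z = x then 1 else 0) * B ^ (k - 1 - rk A z)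
          ≤ ∑ z ∈ Q', (B - 1) * B ^ (k - 1 - rk A z) := step1
        _ = (B - 1) * ∑ z ∈ Q', B ^ (k - 1 - rk A z) := by rw [Finset.mul_sum]
        _ ≤ (B - 1) * ∑ j ∈ Finset.range (k - 1 - s'), B ^ j := by
            apply Nat.mul_le_mul_left
            rw [step2]; exact step4
        _ < B ^ (k - 1 - s') := by omega
    rw [if_pos rfl, ← hs'_def]
    have hsplit_term : (2 * x' + 1) * B ^ (k - 1 - s') = 2 * x' * B ^ (k - 1 - s') + B ^ (k - 1 - s') := by
      ring
    omega

end Inner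


section Key

lemma subset_Sset_digits {r d a : ℕ} (ha : 1 ≤ a) (had : a ≤ d) {z : ℕ}
    (hz : z ∈ Sset r a) : 2 * z + 1 ≤ Bb r d - 1 := by
  rw [mem_Sset_iff ha] at hz
  have h1 : r * (a-1) + r ≤ r * d := by
    rw [← rmul_split ha]; exact Nat.mul_le_mul_left r had
  unfold Bb; omega

lemma key_lemma {r d a : ℕ} (hr : 1 ≤ r) (ha : 1 ≤ a) (had : a ≤ d)
    {σ σ' : Finset ℕ} (hσ : σ ∈ OmegaEdges r d a) (hσ' : σ' ∈ OmegaEdges r d a)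
    (hne : σ' ≠ σ) (hsub : σ.erase (witn r a σ) ⊆ σ') :
    Wpot r d a σ < Wpot r d a σ' := by
  obtain ⟨hxσ, hxS, hxrk⟩ := witn_spec hr hσ
  obtain ⟨hx'σ', hx'S, hx'rk⟩ := witn_spec hr hσ'
  set x := witn r a σ with hx_def
  set x' := witn r a σ' with hx'_def
  obtain ⟨hσsub, hσcard, -⟩ := (mem_omega_iff hr).mp hσ
  obtain ⟨hσ'sub, hσ'card, -⟩ := (mem_omega_iff hr).mp hσ'
  -- obtain y with σ' = insert y (σ.erase x)
  have hecard : (σ.erase x).card = r - 1 := by rw [Finset.card_erase_of_mem hxσ, hσcard]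
  have hnotsub : ¬ σ' ⊆ σ.erase x := by
    intro h
    have := Finset.card_le_card h
    omega
  obtain ⟨y, hyσ', hyne⟩ := Finset.not_subset.mp hnotsub
  have hins_sub : insert y (σ.erase x) ⊆ σ' := by
    intro w hw
    rcases Finset.mem_insert.mp hw with rfl | hw
    · exact hyσ'
    · exact hsub hw
  have hσ'eq : σ' = insert y (σ.erase x) := by
    symm
    apply Finset.eq_of_subset_of_card_le hins_sub
    rw [Finset.card_insert_of_notMem hyne, hecard]
    omega
  have hynex : y ≠ x := by
    rintro rfl
    exact hne (by rw [hσ'eq, Finset.insert_erase hxσ])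
  have hyσ : y ∉ σ := by
    intro h
    exact hyne (Finset.mem_erase.mpr ⟨hynex, h⟩)
  -- notation
  set L := r * (a - 1) with hL_def
  set A := σ ∩ Sset r a with hA_def
  set A' := σ' ∩ Sset r a with hA'_def
  have hxA : x ∈ A := Finset.mem_inter.mpr ⟨hxσ, hxS⟩
  have hx'A' : x' ∈ A' := Finset.mem_inter.mpr ⟨hx'σ', hx'S⟩
  set k := A.card with hk_def
  have hkr : k ≤ r := by
    rw [hk_def, ← hσcard]
    exact Finset.card_le_card (Finset.inter_subset_left)
  have hk1 : 1 ≤ k := Finset.card_pos.mpr ⟨x, hxA⟩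
  have hBpos : 2 ≤ Bb r d := by unfold Bb; omega
  by_cases hyS : y ∈ Sset r a
  · -- inner case
    have hAA' : A' = insert y (A.erase x) := by
      rw [hA'_def, hσ'eq, hA_def]
      ext w
      simp only [mem_inter, mem_insert, mem_erase]
      constructor
      · rintro ⟨(rfl | ⟨hwx, hwσ⟩), hwS⟩
        · exact Or.inl rfl
        · exact Or.inr ⟨hwx, hwσ, hwS⟩
      · rintro (rfl | ⟨hwx, hwσ, hwS⟩)
        · exact ⟨Or.inl rfl, hyS⟩
        · exact ⟨Or.inr ⟨hwx, hwσ⟩, hwS⟩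
    have hyA : y ∉ A := fun h => hyσ (Finset.mem_inter.mp h).1
    have hk' : A'.card = k := by
      rw [hAA', Finset.card_insert_of_notMem (fun h => hyA (Finset.mem_of_mem_erase h)),
        Finset.card_erase_of_mem hxA, hk_def]
      omega
    -- the congruence
    set m := (σ.filter (· ≤ L)).card with hm_def
    have hrk_split : ∀ (τ : Finset ℕ) (w : ℕ), w ∈ Sset r a →
        rk τ w = (τ.filter (· ≤ L)).card + rk (τ ∩ Sset r a) w := by
      intro τ w hwS
      rw [mem_Sset_iff ha] at hwS
      unfold rk
      rw [← Finset.card_union_of_disjoint]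
      · congr 1
        ext z
        simp only [mem_filter, mem_union, mem_inter, mem_Sset_iff ha, ← hL_def]
        constructor
        · rintro ⟨hzτ, hzw⟩
          rcases le_or_gt z L with h | h
          · exact Or.inl ⟨hzτ, h⟩
          · exact Or.inr ⟨⟨hzτ, by omega, by omega⟩, hzw⟩
        · rintro (⟨hzτ, hzL⟩ | ⟨⟨hzτ, -, -⟩, hzw⟩)
          · exact ⟨hzτ, by omega⟩
          · exact ⟨hzτ, hzw⟩
      · rw [Finset.disjoint_left]
        intro z hz hz2
        simp only [mem_filter, mem_inter, mem_Sset_iff ha, ← hL_def] at hz hz2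
        omega
    have hmm' : (σ'.filter (· ≤ L)).card = m := by
      rw [hm_def, hσ'eq]
      congr 1
      rw [Finset.filter_insert, if_neg (by
        rw [mem_Sset_iff ha] at hyS; simp only [← hL_def] at hyS; omega),
        Finset.filter_erase]
      apply Finset.erase_eq_of_notMem
      simp only [mem_filter]
      rw [mem_Sset_iff ha] at hxS
      simp only [← hL_def] at hxS
      rintro ⟨-, h⟩; omega
    have hrkx : rk σ x = m + rk A x := hrk_split σ x hxS
    have hrkx' : rk σ' x' = m + rk A' x' := by
      rw [hrk_split σ' x' hx'S, hmm', hA'_def]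
    -- sums
    have hsum : ∑ i ∈ σ', i + x = ∑ i ∈ σ, i + y := by
      rw [hσ'eq, Finset.sum_insert hyne]
      have h := Finset.sum_erase_add σ (fun i => i) hxσ
      omega
    -- divisibility
    set S1 := ∑ i ∈ σ, i with hS1_def
    set S2 := ∑ i ∈ σ', i with hS2_def
    set sA := rk A x with hsA_def
    set sA' := rk A' x' with hsA'_def
    have e1n : S1 = r * (S1 / r) + m + sA := by
      have h1 := Nat.div_add_mod S1 r
      have h2 : S1 % r = m + sA := by rw [← hxrk, hrkx]
      omega
    have e2n : S2 = r * (S2 / r) + m + sA' := by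
      have h1 := Nat.div_add_mod S2 r
      have h2 : S2 % r = m + sA' := by rw [← hx'rk, hrkx']
      omega
    have e1 : (S1 : ℤ) = (r : ℤ) * (S1 / r : ℕ) + m + sA := by exact_mod_cast congrArg (Nat.cast : ℕ → ℤ) e1n
    have e2 : (S2 : ℤ) = (r : ℤ) * (S2 / r : ℕ) + m + sA' := by exact_mod_cast congrArg (Nat.cast : ℕ → ℤ) e2n
    have e3 : (S2 : ℤ) + x = S1 + y := by exact_mod_cast congrArg (Nat.cast : ℕ → ℤ) hsum
    -- bounds
    have hxb := (mem_Sset_iff ha).mp hxS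
    have hyb := (mem_Sset_iff ha).mp hyS
    simp only [← hL_def] at hxb hyb
    have hsAk : sA + 1 ≤ k := by rw [hsA_def, hk_def]; exact rk_le_of_mem hxA
    have hsA'k : sA' + 1 ≤ k := by
      rw [← hk']; exact rk_le_of_mem hx'A'
    have hxlow : L + 1 + sA ≤ x := by
      have hsub2 : A.filter (· < x) ⊆ Finset.Icc (L + 1) (x - 1) := by
        intro z hz
        simp only [hA_def, mem_filter, mem_inter, mem_Sset_iff ha, ← hL_def] at hz
        simp only [Finset.mem_Icc]
        omega
      have := Finset.card_le_card hsub2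
      rw [Nat.card_Icc] at this
      have : sA ≤ x - 1 + 1 - (L + 1) := this
      omega
    have hxhigh : x + k ≤ L + r + sA + 1 := by
      have hab := rk_add_above hxA
      have hsub2 : A.filter (fun w => x < w) ⊆ Finset.Icc (x + 1) (L + r) := by
        intro z hz
        simp only [hA_def, mem_filter, mem_inter, mem_Sset_iff ha, ← hL_def] at hz
        simp only [Finset.mem_Icc]
        omega
      have hc := Finset.card_le_card hsub2
      rw [Nat.card_Icc] at hc
      rw [← hsA_def, ← hk_def] at hab
      omega
    -- exactness
    have hexact : (y : ℤ) - (x : ℤ) = (sA' : ℤ) - (sA : ℤ) := by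
      set q1 := (S1 / r : ℕ)
      set q2 := (S2 / r : ℕ)
      have hdvd : (y : ℤ) - x - ((sA' : ℤ) - sA) = r * ((q2 : ℤ) - q1) := by
        linear_combination e2 - e1 - e3
      set q := (q2 : ℤ) - q1 with hq_def
      clear_value q1 q2
      have hrn : (0 : ℤ) < r := by exact_mod_cast hr
      have hub : (y : ℤ) - x - ((sA' : ℤ) - sA) < 2 * r := by
        push_cast
        omega
      have hlb : -(2 * (r:ℤ)) < (y : ℤ) - x - ((sA' : ℤ) - sA) := by
        push_cast
        omega
      rw [hdvd] at hub hlb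
      have hq2 : q < 2 := by
        have h2 : (r:ℤ) * q < r * 2 := by linarith
        exact (mul_lt_mul_iff_right₀ hrn).mp h2
      have hq1 : -2 < q := by
        have h2 : (r:ℤ) * (-2) < r * q := by linarith
        exact (mul_lt_mul_iff_right₀ hrn).mp h2
      have hq3 : q = -1 ∨ q = 0 ∨ q = 1 := by omega
      rcases hq3 with hq | hq | hq
      · exfalso
        have hcase : (y : ℤ) - x - ((sA' : ℤ) - sA) = -r := by rw [hdvd, hq]; ring
        omega
      · have hcase : (y : ℤ) - x - ((sA' : ℤ) - sA) = 0 := by rw [hdvd, hq]; ring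
        omega
      · exfalso
        have hcase : (y : ℤ) - x - ((sA' : ℤ) - sA) = r := by rw [hdvd, hq]; ring
        omega
    -- apply inner_lt
    have hVV : Vpot r d a σ < Vpot r d a σ' := by
      unfold Vpot
      rw [← hA_def, ← hA'_def, ← hx_def, ← hx'_def, ← hk_def, hk']
      exact inner_lt hBpos hAA' hxA hyA (fun h => hynex h.symm) rfl hx'A'
        (fun z hz => subset_Sset_digits ha had (Finset.mem_inter.mp hz).2)
        (fun z hz => subset_Sset_digits ha had (Finset.mem_inter.mp hz).2)
        hexact
    unfold Wpot
    rw [← hA_def, ← hA'_def, ← hk_def, hk']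
    omega
  · -- outer case : k decreases
    have hAA' : A' = A.erase x := by
      rw [hA'_def, hσ'eq, hA_def]
      ext w
      simp only [mem_inter, mem_insert, mem_erase]
      constructor
      · rintro ⟨(rfl | ⟨hwx, hwσ⟩), hwS⟩
        · exact absurd hwS hyS
        · exact ⟨hwx, hwσ, hwS⟩
      · rintro ⟨hwx, hwσ, hwS⟩
        exact ⟨Or.inr ⟨hwx, hwσ⟩, hwS⟩
    have hk' : A'.card = k - 1 := by
      rw [hAA', Finset.card_erase_of_mem hxA, hk_def]
    have hV := Vpot_lt hr ha had (σ := σ) (by rw [← hA_def, ← hk_def]; omega)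
    have hVnn : 0 ≤ Vpot r d a σ' := Nat.zero_le _
    unfold Wpot
    rw [← hA_def, ← hA'_def, ← hk_def, hk']
    have : (r - (k - 1)) = (r - k) + 1 := by omega
    rw [this, Nat.add_mul]
    unfold Vpot at hV ⊢
    rw [← hA_def, ← hk_def] at hV ⊢
    omega

end Key

/-- A family `E` of hyperedges is leaf-equivalent to the empty hypergraph if its
hyperedges can be enumerated `σ_1, ..., σ_n` so that each `σ_i` has a face
`σ_i \ {s}` (`s ∈ σ_i`) not contained in any earlier `σ_j`. -/
def LeafEquivToEmpty (E : Finset (Finset ℕ)) : Prop :=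
  ∃ l : List (Finset ℕ), l.Nodup ∧ l.toFinset = E ∧
    ∀ i : Fin l.length, ∃ s ∈ l.get i,
      ∀ j : Fin l.length, (j : ℕ) < (i : ℕ) → ¬ (l.get i \ {s} ⊆ l.get j)

/-- The boundary of a single simplex `{a_1 < a_2 < ... < a_k}`:
`∑_{s=1}^{k} (-1)^{s+1} {a_1,...,a_{s-1},a_{s+1},...,a_k}`. -/
noncomputable def boundaryOf (σ : Finset ℕ) : Finset ℕ →₀ ℚ :=
  ∑ s ∈ σ, ((-1 : ℚ) ^ ((σ.filter (· < s)).card)) • Finsupp.single (σ.erase s) (1 : ℚ)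

/-- The simplicial boundary map `∂` on the free `ℚ`-vector space with basis the
finite subsets of `ℕ`. -/
noncomputable def boundaryMap : (Finset ℕ →₀ ℚ) →ₗ[ℚ] (Finset ℕ →₀ ℚ) :=
  Finsupp.lsum ℚ (fun σ => LinearMap.toSpanSingleton ℚ (Finset ℕ →₀ ℚ) (boundaryOf σ))

/-- The space of top-dimensional cycles of the hypergraph with hyperedge set `E`:
elements of the span of `E` killed by the boundary map.  Its dimension is the top
Betti number. -/
noncomputable def cycleSpace (E : Finset (Finset ℕ)) : Submodule ℚ (Finset ℕ →₀ ℚ) :=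
  Finsupp.supported ℚ ℚ (↑E : Set (Finset ℕ)) ⊓ LinearMap.ker boundaryMap

lemma boundaryOf_apply (σ τ : Finset ℕ) :
    boundaryOf σ τ = ∑ z ∈ σ, ((-1 : ℚ) ^ ((σ.filter (· < z)).card)) *
      (if σ.erase z = τ then 1 else 0) := by
  rw [boundaryOf, Finset.sum_apply']
  apply Finset.sum_congr rfl
  intro z _
  rw [Finsupp.smul_apply, Finsupp.single_apply, smul_eq_mul]


/-- for every `1 ≤ a ≤ d`, the boundary map is injective on the span of the
hyperedge set of `Ω_a^{(r,d)}`; i.e. `b_{r-1}(Ω_a^{(r,d)}) = 0` (so the cycle space is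
trivial), which together with homogeneity shows that the partition
`(Ω_1^{(r,d)},...,Ω_d^{(r,d)})` of `K_{rd}^{(r)}` is acyclic. -/
theorem stmt17 (r d : ℕ) (hr : 1 ≤ r) (hd : 1 ≤ d) :
    ∀ a : ℕ, 1 ≤ a → a ≤ d →
      (∀ c : Finset ℕ →₀ ℚ,
        (↑c.support : Set (Finset ℕ)) ⊆ ↑(OmegaEdges r d a) →
        boundaryMap c = 0 → c = 0) ∧
      cycleSpace (OmegaEdges r d a) = ⊥ := by
  intro a ha had
  have main : ∀ c : Finset ℕ →₀ ℚ,
      (↑c.support : Set (Finset ℕ)) ⊆ ↑(OmegaEdges r d a) →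
      boundaryMap c = 0 → c = 0 := by
    intro c hsupp hbd
    by_contra hc
    have hne : c.support.Nonempty := Finsupp.support_nonempty_iff.mpr hc
    obtain ⟨σ, hσmem, hmax⟩ := Finset.exists_max_image c.support (Wpot r d a) hne
    have hσE : σ ∈ OmegaEdges r d a := by
      have := hsupp (Finset.mem_coe.mpr hσmem)
      exact Finset.mem_coe.mp this
    obtain ⟨hxσ, hxS, hxrk⟩ := witn_spec hr hσE
    set x := witn r a σ with hx_def
    set τ := σ.erase x with hτ_def
    -- boundary evaluated at τ
    have h1 : boundaryMap c = ∑ σ' ∈ c.support, c σ' • boundaryOf σ' := by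
      rw [boundaryMap, Finsupp.lsum_apply, Finsupp.sum]
      apply Finset.sum_congr rfl
      intro σ' _
      rw [LinearMap.toSpanSingleton_apply]
    have h2 : (boundaryMap c) τ = ∑ σ' ∈ c.support, c σ' * boundaryOf σ' τ := by
      rw [h1, Finset.sum_apply']
      apply Finset.sum_congr rfl
      intro σ' _
      rw [Finsupp.smul_apply, smul_eq_mul]
    have hothers : ∀ σ' ∈ c.support, σ' ≠ σ → boundaryOf σ' τ = 0 := by
      intro σ' hσ'mem hσ'ne
      have hσ'E : σ' ∈ OmegaEdges r d a := by
        have := hsupp (Finset.mem_coe.mpr hσ'mem)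
        exact Finset.mem_coe.mp this
      rw [boundaryOf_apply]
      apply Finset.sum_eq_zero
      intro z hz
      rw [if_neg, mul_zero]
      intro heq
      have hsub : τ ⊆ σ' := by
        rw [← heq]
        exact Finset.erase_subset _ _
      have := key_lemma hr ha had hσE hσ'E hσ'ne hsub
      have := hmax σ' hσ'mem
      omega
    have hσterm : boundaryOf σ τ = (-1 : ℚ) ^ ((σ.filter (· < x)).card) := by
      rw [boundaryOf_apply]
      rw [Finset.sum_eq_single_of_mem x hxσ]
      · rw [if_pos rfl, mul_one]
      · intro z hzσ hzx
        rw [if_neg, mul_zero]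
        intro heq
        have : x ∈ σ.erase z := Finset.mem_erase.mpr ⟨fun h => hzx h.symm, hxσ⟩
        rw [heq, hτ_def] at this
        exact (Finset.notMem_erase x σ) this
    have hzero : (0 : ℚ) = c σ * (-1 : ℚ) ^ ((σ.filter (· < x)).card) := by
      have hbdτ : (boundaryMap c) τ = 0 := by rw [hbd]; rfl
      rw [← hbdτ, h2]
      rw [Finset.sum_eq_single_of_mem σ hσmem]
      · rw [hσterm]
      · intro σ' hσ'mem hσ'ne
        rw [hothers σ' hσ'mem hσ'ne, mul_zero]
    have hcσ : c σ = 0 := by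
      have hpow : (-1 : ℚ) ^ ((σ.filter (· < x)).card) ≠ 0 := by
        apply pow_ne_zero; norm_num
      field_simp at hzero
      exact (mul_eq_zero.mp hzero.symm).resolve_right hpow
    exact (Finsupp.mem_support_iff.mp hσmem) hcσ
  refine ⟨main, ?_⟩
  rw [eq_bot_iff]
  intro c hc
  rw [cycleSpace, Submodule.mem_inf] at hc
  obtain ⟨h1, h2⟩ := hc
  rw [Finsupp.mem_supported] at h1
  rw [LinearMap.mem_ker] at h2
  rw [Submodule.mem_bot]
  exact main c h1 h2
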